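/- arXiv:0710.3825 — 2 statements merged into one kernel-verified Lean document; each statement's English description precedes it below -/
import Mathlib

section
/- For all a, b ∈ V × V, G_y(J_y a, J_y b) = −G_y(a, b). Together with J_y² = −id, this says that (T̃M, g̃₂, J̃) is an almost anti-Hermitian manifold. -/
open scoped InnerProductSpace

/-- The 0-homogeneous lift `g̃₂` of the metric, represented pointwise on `W = V × V` by
`G_y((u₁,w₁),(u₂,w₂)) = (2/‖y‖)(⟨u₁,w₂⟩ + ⟨w₁,u₂⟩)`. -/
noncomputable def Ghom {V : Type*} [NormedAddCommGroup V] [InnerProductSpace ℝ V]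
    (y : V) (a b : V × V) : ℝ :=
  (2 / ‖y‖) * (⟪a.1, b.2⟫_ℝ + ⟪a.2, b.1⟫_ℝ)

/-- The natural almost complex structure `J̃`, represented pointwise on `W = V × V` by
`J_y(u,w) = ((1/‖y‖)w, −‖y‖u)`. -/
noncomputable def Jnat {V : Type*} [NormedAddCommGroup V] [InnerProductSpace ℝ V]
    (y : V) (a : V × V) : V × V :=
  ((1 / ‖y‖) • a.2, -(‖y‖ • a.1))

section

variable {V : Type*} [NormedAddCommGroup V] [InnerProductSpace ℝ V]

/- `J_y` swaps the horizontal and vertical parts, rescaling them by `1/‖y‖` and `-‖y‖`; each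
term of `G_y` pairs one of each, so picks up the factor `-1`. For `y = 0` both sides vanish
because `2 / 0 = 0`. -/
theorem Ghom_Jnat_Jnat (y : V) (a b : V × V) :
    Ghom y (Jnat y a) (Jnat y b) = -Ghom y a b := by
  rcases eq_or_ne ‖y‖ 0 with hy | hy
  · simp [Ghom, hy]
  · simp only [Ghom, Jnat, real_inner_smul_left, real_inner_smul_right, inner_neg_left,
      inner_neg_right]
    field_simp
    ring

theorem Jnat_Jnat {y : V} (hy : y ≠ 0) (a : V × V) : Jnat y (Jnat y a) = -a := by
  have hy' : ‖y‖ ≠ 0 := norm_ne_zero_iff.mpr hy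
  ext <;> simp [Jnat, smul_smul, hy']

end

theorem almost_anti_hermitian_structure_general
    (V : Type*) [NormedAddCommGroup V] [InnerProductSpace ℝ V]
    (y : V) (hy : y ≠ 0) :
    (∀ a b : V × V, Ghom y (Jnat y a) (Jnat y b) = - Ghom y a b) ∧
    (∀ a : V × V, Jnat y (Jnat y a) = -a) :=
  ⟨Ghom_Jnat_Jnat y, Jnat_Jnat hy⟩

/-- `G_y(J_y a, J_y b) = −G_y(a, b)` and `J_y² = −id`: the triple `(T̃M, g̃₂, J̃)` is an
almost anti-Hermitian manifold. -/
theorem almost_anti_hermitian_structure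
    (V : Type*) [NormedAddCommGroup V] [InnerProductSpace ℝ V] [FiniteDimensional ℝ V]
    (y : V) (hy : y ≠ 0) :
    (∀ a b : V × V, Ghom y (Jnat y a) (Jnat y b) = - Ghom y a b) ∧
    (∀ a : V × V, Jnat y (Jnat y a) = -a) :=
  almost_anti_hermitian_structure_general V y hy
end

section
/- The twin tensor h_Q of the structure (g̃₂, Q̃), defined by h_Q(a, b) = G_y(Q_y a, b), is given explicitly by h_Q((u₁,w₁),(u₂,w₂)) = 2⟨u₁,u₂⟩ + (2/‖y‖²)⟨w₁,w₂⟩, i.e. h_Q = 2 g_{ij} dx^i dx^j + (2 g_{ij}/‖y‖²) δy^i δy^j; it is a positive definite symmetric bilinear form (an inner product) on V × V, and it is 0-homogeneous on the fibers: for every t > 0 and all a, b, h_{Q, ty}(φ_t a, φ_t b) = h_{Q, y}(a, b). -/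
open scoped InnerProductSpace

/-- The natural almost product structure `Q̃`, represented pointwise on `W = V × V` by
`Q_y(u,w) = ((1/‖y‖)w, ‖y‖u)`. -/
noncomputable def Qnat {V : Type*} [NormedAddCommGroup V] [InnerProductSpace ℝ V]
    (y : V) (a : V × V) : V × V :=
  ((1 / ‖y‖) • a.2, ‖y‖ • a.1)

/-- The twin tensor `h_Q` of the structure `(g̃₂, Q̃)`: `h_Q(a, b) = G_y(Q_y a, b)`. -/
noncomputable def twinQ {V : Type*} [NormedAddCommGroup V] [InnerProductSpace ℝ V]
    (y : V) (a b : V × V) : ℝ :=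
  Ghom y (Qnat y a) b

/-- The differential `φ_t` of the homothety `h_t : (x,y) ↦ (x,ty)` in the adapted frame:
`φ_t(u,w) = (u, t•w)`. -/
def homothety {V : Type*} [NormedAddCommGroup V] [InnerProductSpace ℝ V]
    (t : ℝ) (a : V × V) : V × V :=
  (a.1, t • a.2)

section

variable {V : Type*} [NormedAddCommGroup V] [InnerProductSpace ℝ V]

theorem twinQ_eq {y : V} (hy : y ≠ 0) (a b : V × V) :
    twinQ y a b = 2 * ⟪a.1, b.1⟫_ℝ + (2 / ‖y‖ ^ 2) * ⟪a.2, b.2⟫_ℝ := by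
  have : ‖y‖ ≠ 0 := norm_ne_zero_iff.mpr hy
  simp only [twinQ, Ghom, Qnat, real_inner_smul_left]
  field_simp
  ring

theorem twinQ_comm {y : V} (hy : y ≠ 0) (a b : V × V) : twinQ y a b = twinQ y b a := by
  rw [twinQ_eq hy, twinQ_eq hy, real_inner_comm a.1, real_inner_comm a.2]

theorem twinQ_self {y : V} (hy : y ≠ 0) (a : V × V) :
    twinQ y a a = 2 * ‖a.1‖ ^ 2 + (2 / ‖y‖ ^ 2) * ‖a.2‖ ^ 2 := by
  rw [twinQ_eq hy, real_inner_self_eq_norm_sq, real_inner_self_eq_norm_sq]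

theorem twinQ_self_pos {y : V} (hy : y ≠ 0) {a : V × V} (ha : a ≠ 0) : 0 < twinQ y a a := by
  have hc : 0 < 2 / ‖y‖ ^ 2 := by positivity
  rw [twinQ_self hy]
  by_cases h₁ : a.1 = 0
  · have h₂ : a.2 ≠ 0 := fun h₂ => ha (Prod.ext h₁ h₂)
    have := norm_pos_iff.mpr h₂
    positivity
  · have := norm_pos_iff.mpr h₁
    positivity

theorem twinQ_smul_homothety {y : V} (hy : y ≠ 0) {t : ℝ} (ht : t ≠ 0) (a b : V × V) :
    twinQ (t • y) (homothety t a) (homothety t b) = twinQ y a b := by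
  have hny : ‖y‖ ≠ 0 := norm_ne_zero_iff.mpr hy
  rw [twinQ_eq (smul_ne_zero ht hy), twinQ_eq hy]
  simp only [homothety, norm_smul, Real.norm_eq_abs, mul_pow, sq_abs,
    real_inner_smul_left, real_inner_smul_right]
  field_simp

end

theorem twinQ_formula_inner_product_homogeneous_general
    (V : Type*) [NormedAddCommGroup V] [InnerProductSpace ℝ V]
    (y : V) (hy : y ≠ 0) :
    (∀ a b : V × V,
      twinQ y a b = 2 * ⟪a.1, b.1⟫_ℝ + (2 / ‖y‖ ^ 2) * ⟪a.2, b.2⟫_ℝ) ∧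
    (∀ a b : V × V, twinQ y a b = twinQ y b a) ∧
    (∀ a : V × V, a ≠ 0 → 0 < twinQ y a a) ∧
    (∀ t : ℝ, 0 < t → ∀ a b : V × V,
      twinQ (t • y) (homothety t a) (homothety t b) = twinQ y a b) := by
  exact ⟨twinQ_eq hy, twinQ_comm hy, fun _ => twinQ_self_pos hy,
    fun _ ht => twinQ_smul_homothety hy ht.ne'⟩

/-- The twin tensor `h_Q` of `(g̃₂, Q̃)` is given by
`h_Q((u₁,w₁),(u₂,w₂)) = 2⟨u₁,u₂⟩ + (2/‖y‖²)⟨w₁,w₂⟩`, i.e.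
`h_Q = 2 g_{ij} dxⁱ dxʲ + (2 g_{ij}/‖y‖²) δyⁱ δyʲ`; it is a positive definite symmetric
bilinear form (an inner product) on `V × V`, and it is 0-homogeneous on the fibers:
`h_{Q,ty}(φ_t a, φ_t b) = h_{Q,y}(a, b)` for every `t > 0`. -/
theorem twinQ_formula_inner_product_homogeneous
    (V : Type*) [NormedAddCommGroup V] [InnerProductSpace ℝ V] [FiniteDimensional ℝ V]
    (y : V) (hy : y ≠ 0) :
    (∀ a b : V × V,
      twinQ y a b = 2 * ⟪a.1, b.1⟫_ℝ + (2 / ‖y‖ ^ 2) * ⟪a.2, b.2⟫_ℝ) ∧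
    (∀ a b : V × V, twinQ y a b = twinQ y b a) ∧
    (∀ a : V × V, a ≠ 0 → 0 < twinQ y a a) ∧
    (∀ t : ℝ, 0 < t → ∀ a b : V × V,
      twinQ (t • y) (homothety t a) (homothety t b) = twinQ y a b) :=
  twinQ_formula_inner_product_homogeneous_general V y hy
end
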